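/- Let G be a compact group with normalized Haar measure, K a closed subgroup, ξ: G → G/K the quotient map, and σ the unique G-invariant probability measure on G/K (the pushforward of Haar measure under ξ). A K-right-invariant finite measure μ on G is absolutely continuous with respect to Haar measure with K-right-invariant density H∘ξ if and only if the pushforward measure μ∘ξ⁻¹ on G/K is absolutely continuous with respect to σ with density H. -/

import Mathlib

open MeasureTheory
open scoped ENNReal

/-!
Both `μ` and `ν = m_G.withDensity (H ∘ ξ)` are right `K`-invariant. Averaging a continuous `f` over
`K` against Haar measure of `K` yields a function constant on cosets, with the same integral
against any right `K`-invariant finite measure; so `ξ_* μ = ξ_* ν` forces `∫ f dμ = ∫ f dν` for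
every continuous `f`. Pushing forward along `f` shows that `μ` and `ν` agree on the zero sets
`f⁻¹ {1}`. By Halmos' theorem Haar measure is inner regular with respect to zero sets, and so is
the finite measure `ν ≪ m_G`; thus `ν ≤ μ`, and since both have the same total mass, `μ = ν`.
-/

namespace MeasureTheory.Measure

variable {α : Type*} [MeasurableSpace α]

lemma map_withDensity_comp {β : Type*} [MeasurableSpace β] (μ : Measure α) {e : α → β}
    (he : Measurable e) {f : β → ℝ≥0∞} (hf : Measurable f) :
    (μ.withDensity (f ∘ e)).map e = (μ.map e).withDensity f := by
  ext s hs
  rw [map_apply he hs, withDensity_apply _ (he hs), withDensity_apply _ hs,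
    setLIntegral_map hs hf he]
  rfl

lemma InnerRegularWRT.withDensity {μ : Measure α} {p : Set α → Prop}
    (hμ : μ.InnerRegularWRT p fun s ↦ MeasurableSet s ∧ μ s ≠ ∞)
    (hp : ∀ s, p s → MeasurableSet s) {f : α → ℝ≥0∞} (hf : ∫⁻ a, f a ∂μ ≠ ∞) :
    (μ.withDensity f).InnerRegularWRT p fun s ↦ MeasurableSet s ∧ μ s ≠ ∞ := by
  intro s ⟨hs, hμs⟩ r hr
  have hμs₀ : μ s ≠ 0 := fun h ↦ by
    simp [withDensity_absolutelyContinuous μ f h] at hr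
  obtain ⟨δ, hδ, hδs⟩ := exists_pos_setLIntegral_lt_of_measure_lt hf (tsub_pos_of_lt hr).ne'
  obtain ⟨c, hcs, hpc, hc⟩ := hμ ⟨hs, hμs⟩ (μ s - δ) (ENNReal.sub_lt_self hμs hμs₀ hδ.ne')
  refine ⟨c, hcs, hpc, ?_⟩
  have hμdiff : μ (s \ c) < δ := by
    rw [measure_sdiff hcs (hp c hpc).nullMeasurableSet (ne_top_of_le_ne_top hμs (measure_mono hcs))]
    refine ENNReal.sub_lt_of_lt_add (measure_mono hcs) ?_
    rw [add_comm]
    exact ENNReal.lt_add_of_sub_lt_right (.inl hμs) hc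
  have hνdiff : μ.withDensity f (s \ c) < μ.withDensity f s - r := by
    rw [withDensity_apply _ (hs.diff (hp c hpc))]
    exact hδs _ hμdiff
  exact lt_of_tsub_lt_tsub_left (le_measure_sdiff.trans_lt hνdiff)

lemma InnerRegularWRT.eq_of_forall_eq_of_measure_univ_eq {μ ν : Measure α} [IsFiniteMeasure ν]
    {p : Set α → Prop} (hν : ν.InnerRegularWRT p MeasurableSet) (hμν : ∀ s, p s → μ s = ν s)
    (huniv : μ .univ = ν .univ) : μ = ν := by
  refine (eq_of_le_of_measure_univ_eq (le_intro fun s hs _ ↦ ?_) huniv.symm).symm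
  rw [hν.measure_eq_iSup hs]
  exact iSup₂_le fun c hcs ↦ iSup_le fun hpc ↦ (hμν c hpc).symm.trans_le (measure_mono hcs)

lemma map_eq_map_of_forall_integral_eq [TopologicalSpace α] [OpensMeasurableSpace α]
    {μ ν : Measure α} [IsFiniteMeasure μ] [IsFiniteMeasure ν]
    (h : ∀ f : α → ℝ, Continuous f → ∫ a, f a ∂μ = ∫ a, f a ∂ν) {f : α → ℝ} (hf : Continuous f) :
    μ.map f = ν.map f :=
  ext_of_forall_integral_eq_of_IsFiniteMeasure fun g ↦ by
    rw [integral_map hf.aemeasurable g.continuous.aestronglyMeasurable,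
      integral_map hf.aemeasurable g.continuous.aestronglyMeasurable]
    exact h _ (g.continuous.comp hf)

end MeasureTheory.Measure

lemma QuotientGroup.integral_eq_of_map_mk_eq {G : Type*} [Group G] [MeasurableSpace G]
    {K : Subgroup G} {μ ν : Measure G} (h : μ.map ((↑) : G → G ⧸ K) = ν.map (↑))
    {φ : G → ℝ} (hφ : Measurable φ) (hφK : ∀ g, ∀ k ∈ K, φ (g * k) = φ g) :
    ∫ g, φ g ∂μ = ∫ g, φ g ∂ν := by
  let F : G ⧸ K → ℝ := Quotient.lift φ fun a b hab ↦ by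
    rw [← hφK a _ (QuotientGroup.leftRel_apply.mp hab), mul_inv_cancel_left]
  have hF : Measurable F := QuotientGroup.measurable_from_quotient.mpr hφ
  have hmk : Measurable ((↑) : G → G ⧸ K) := QuotientGroup.measurable_coe
  calc ∫ g, φ g ∂μ = ∫ x, F x ∂(μ.map (↑)) :=
        (integral_map hmk.aemeasurable hF.aestronglyMeasurable).symm
    _ = ∫ g, φ g ∂ν := by rw [h, integral_map hmk.aemeasurable hF.aestronglyMeasurable]; rfl

section TopologicalGroup

variable {G : Type*} [Group G] [TopologicalSpace G] [IsTopologicalGroup G]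
  [MeasurableSpace G] [BorelSpace G] {K : Subgroup G}

lemma Subgroup.integral_mul_mem_mul (mK : Measure K) [mK.IsMulLeftInvariant] (f : G → ℝ)
    (g : G) {k : G} (hk : k ∈ K) : ∫ k', f (g * k * k') ∂mK = ∫ k', f (g * k') ∂mK := by
  simpa [mul_assoc] using integral_mul_left_eq_self (fun k' : K ↦ f (g * k')) ⟨k, hk⟩

variable [CompactSpace G]

lemma MeasureTheory.Measure.exists_isHaarMeasure_isProbabilityMeasure :
    ∃ μ : Measure G, μ.IsHaarMeasure ∧ IsProbabilityMeasure μ :=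
  ⟨haarMeasure ⊤, inferInstance, ⟨haarMeasure_self⟩⟩

lemma MeasureTheory.Measure.isMulRightInvariant_of_isProbabilityMeasure
    (μ : Measure G) [μ.IsHaarMeasure] [IsProbabilityMeasure μ] : μ.IsMulRightInvariant where
  map_mul_right_eq_self g := by
    have : IsProbabilityMeasure (μ.map (· * g)) := isProbabilityMeasure_map (by fun_prop)
    exact isHaarMeasure_eq_of_isProbabilityMeasure _ μ

lemma MeasureTheory.Measure.innerRegularWRT_preimage_one_withDensity
    (μ : Measure G) [μ.IsHaarMeasure] {f : G → ℝ≥0∞} [IsFiniteMeasure (μ.withDensity f)] :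
    (μ.withDensity f).InnerRegularWRT (fun s ↦ ∃ φ : G → ℝ, Continuous φ ∧ s = φ ⁻¹' {1})
      MeasurableSet := by
  have hf : ∫⁻ g, f g ∂μ ≠ ∞ := by simpa using measure_ne_top (μ.withDensity f) .univ
  refine (innerRegularWRT_preimage_one_hasCompactSupport_measure_ne_top_of_group.withDensity
    ?_ hf).mono (fun s hs ↦ ⟨hs, measure_ne_top μ s⟩) fun s ⟨φ, hφ, _, hs⟩ ↦ ⟨φ, hφ, hs⟩
  rintro s ⟨φ, hφ, _, rfl⟩
  exact measurableSet_singleton 1 |>.preimage hφ.measurable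

lemma MeasureTheory.Measure.map_mul_mem_withDensity_comp_mk (μ : Measure G)
    [μ.IsHaarMeasure] [IsProbabilityMeasure μ] {H : G ⧸ K → ℝ≥0∞} (hH : Measurable H)
    {k : G} (hk : k ∈ K) :
    (μ.withDensity (H ∘ (↑))).map (· * k) = μ.withDensity (H ∘ (↑)) := by
  have := isMulRightInvariant_of_isProbabilityMeasure μ
  have hHk : H ∘ ((↑) : G → G ⧸ K) = (H ∘ (↑)) ∘ (· * k) :=
    funext fun g ↦ congrArg H (QuotientGroup.mk_mul_of_mem g hk).symm
  conv_lhs => rw [hHk]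
  rw [map_withDensity_comp μ (measurable_mul_const k) (hH.comp QuotientGroup.measurable_coe),
    map_mul_right_eq_self]

variable [CompactSpace K]

lemma Subgroup.measurable_integral_mul (mK : Measure K) [IsFiniteMeasure mK] {f : G → ℝ}
    (hf : Continuous f) : Measurable fun g ↦ ∫ k, f (g * k) ∂mK :=
  ((HasCompactSupport.of_compactSpace _).stronglyMeasurable_of_prod
    (f := fun p : G × K ↦ f (p.1 * p.2)) (by fun_prop)).integral_prod_right'.measurable

lemma Subgroup.integral_integral_mul_eq_integral (mK : Measure K) [IsProbabilityMeasure mK]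
    {m : Measure G} [IsFiniteMeasure m] (hm : ∀ k ∈ K, m.map (· * k) = m) {f : G → ℝ}
    (hf : Continuous f) : ∫ g, ∫ k, f (g * k) ∂mK ∂m = ∫ g, f g ∂m := by
  have hfK : Continuous fun p : G × K ↦ f (p.1 * p.2) := by fun_prop
  rw [integral_integral_swap_of_hasCompactSupport hfK (.of_compactSpace _)]
  have hk : ∀ k : K, ∫ g, f (g * k) ∂m = ∫ g, f g ∂m := fun k ↦ by
    conv_rhs => rw [← hm k k.2]
    rw [integral_map (by fun_prop) hf.aestronglyMeasurable]
  simp [hk]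

lemma Subgroup.integral_eq_of_map_mk_eq_of_continuous {μ ν : Measure G} [IsFiniteMeasure μ]
    [IsFiniteMeasure ν] (hμ : ∀ k ∈ K, μ.map (· * k) = μ) (hν : ∀ k ∈ K, ν.map (· * k) = ν)
    (h : μ.map ((↑) : G → G ⧸ K) = ν.map (↑)) {f : G → ℝ} (hf : Continuous f) :
    ∫ g, f g ∂μ = ∫ g, f g ∂ν := by
  obtain ⟨mK, _, _⟩ := Measure.exists_isHaarMeasure_isProbabilityMeasure (G := K)
  rw [← K.integral_integral_mul_eq_integral mK hμ hf,
    ← K.integral_integral_mul_eq_integral mK hν hf]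
  exact QuotientGroup.integral_eq_of_map_mk_eq h (K.measurable_integral_mul mK hf)
    fun g k hk ↦ K.integral_mul_mem_mul mK f g hk

lemma Subgroup.eq_of_map_mk_eq {μ ν : Measure G} [IsFiniteMeasure μ] [IsFiniteMeasure ν]
    (hμ : ∀ k ∈ K, μ.map (· * k) = μ) (hν : ∀ k ∈ K, ν.map (· * k) = ν)
    (hν_reg : ν.InnerRegularWRT (fun s ↦ ∃ φ : G → ℝ, Continuous φ ∧ s = φ ⁻¹' {1})
      MeasurableSet)
    (h : μ.map ((↑) : G → G ⧸ K) = ν.map (↑)) : μ = ν := by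
  have hmk : Measurable ((↑) : G → G ⧸ K) := QuotientGroup.measurable_coe
  refine hν_reg.eq_of_forall_eq_of_measure_univ_eq ?_ ?_
  · rintro s ⟨φ, hφ, rfl⟩
    have := Measure.map_eq_map_of_forall_integral_eq
      (fun f hf ↦ K.integral_eq_of_map_mk_eq_of_continuous hμ hν h hf) hφ
    rw [← Measure.map_apply hφ.measurable (measurableSet_singleton 1), this,
      Measure.map_apply hφ.measurable (measurableSet_singleton 1)]
  · simpa [Measure.map_apply hmk .univ] using congrArg (· .univ) h

end TopologicalGroup

theorem stmt_1 {G : Type*} [Group G] [TopologicalSpace G] [IsTopologicalGroup G]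
    [CompactSpace G] [MeasurableSpace G] [BorelSpace G]
    (mG : Measure G) [mG.IsHaarMeasure] [IsProbabilityMeasure mG]
    (K : Subgroup G) (hKc : IsClosed (K : Set G))
    (μ : Measure G) [IsFiniteMeasure μ]
    (hinv : ∀ k ∈ K, Measure.map (fun g => g * k) μ = μ)
    (σ : Measure (G ⧸ K)) (hσ : σ = mG.map (QuotientGroup.mk : G → G ⧸ K))
    (H : G ⧸ K → ℝ≥0∞) (hH : Measurable H) :
    μ = mG.withDensity (fun g => H (QuotientGroup.mk g)) ↔
      μ.map (QuotientGroup.mk : G → G ⧸ K) = σ.withDensity H := by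
  have hmk : Measurable (QuotientGroup.mk : G → G ⧸ K) := QuotientGroup.measurable_coe
  have hmap : (mG.withDensity (H ∘ (↑))).map (QuotientGroup.mk : G → G ⧸ K) = σ.withDensity H :=
    hσ ▸ mG.map_withDensity_comp hmk hH
  refine ⟨fun h ↦ h ▸ hmap, fun h ↦ ?_⟩
  have : CompactSpace K := isCompact_iff_compactSpace.mp hKc.isCompact
  have : IsFiniteMeasure (mG.withDensity (H ∘ (↑))) :=
    (Measure.isFiniteMeasure_map_iff hmk.aemeasurable).mp (hmap.trans h.symm ▸ inferInstance)
  change μ = mG.withDensity (H ∘ (↑))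
  exact K.eq_of_map_mk_eq hinv (fun k hk ↦ mG.map_mul_mem_withDensity_comp_mk hH hk)
    mG.innerRegularWRT_preimage_one_withDensity (h.trans hmap.symm)
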